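/- Optimal contraction constant on ℓ_p spheres: In the ℓ_p-sphere setting with metric dist(x,y) := ∑_i ||x_i|^p − |y_i|^p| + ∑_i 1_{x_i y_i < 0} and conditional resampling kernels T_A, for any probability vector (θ_A)_{A⊆[n]}, the optimal constant κ in ∑_A θ_A W₁(T_A(x,·), T_A(y,·)) ≤ (1−κ) dist(x,y) (holding for all x,y ∈ Ω) equals θ⋆⋆ := min_{i<j} ∑_{A ⊇ {i,j}} θ_A. -/

import Mathlib

open MeasureTheory ProbabilityTheory
open scoped BigOperators Classical

noncomputable def pGibbs (n : ℕ) (p c : ℝ) : Measure (Fin n → ℝ) :=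
  (volume : Measure (Fin n → ℝ)).withDensity
    (fun g => ENNReal.ofReal (c * Real.exp (-∑ i, |g i| ^ p)))

noncomputable def coneMeasure (n : ℕ) (p c : ℝ) : Measure (Fin n → ℝ) :=
  (pGibbs n p c).map (fun g i => g i / (∑ j, |g j| ^ p) ^ (1 / p))

noncomputable def lpKernel (n : ℕ) (p c : ℝ) (A : Finset (Fin n)) (x : Fin n → ℝ) :
    Measure (Fin n → ℝ) :=
  (coneMeasure n p c).map
    (fun z i => if i ∈ A then
        ((∑ j ∈ A, |x j| ^ p) / (∑ j ∈ A, |z j| ^ p)) ^ (1 / p) * z i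
      else x i)

noncomputable def distLp (n : ℕ) (p : ℝ) (x y : Fin n → ℝ) : ℝ :=
  ∑ i, |(|x i| ^ p - |y i| ^ p)| + ∑ i, (if x i * y i < 0 then (1:ℝ) else 0)

noncomputable def W1lp (n : ℕ) (p : ℝ) (μ ν : Measure (Fin n → ℝ)) : ℝ :=
  sInf {r : ℝ | ∃ π : Measure ((Fin n → ℝ) × (Fin n → ℝ)), IsProbabilityMeasure π ∧
    π.map Prod.fst = μ ∧ π.map Prod.snd = ν ∧ r = ∫ q, distLp n p q.1 q.2 ∂π}

-- ### auxiliary machinery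

lemma meas_rpow_const (p : ℝ) : Measurable (fun x : ℝ => x ^ p) := by measurability

/-- The map defining `lpKernel`. -/
noncomputable def kerMap (n : ℕ) (p : ℝ) (A : Finset (Fin n)) (x : Fin n → ℝ) :
    (Fin n → ℝ) → (Fin n → ℝ) :=
  fun z i => if i ∈ A then
      ((∑ j ∈ A, |x j| ^ p) / (∑ j ∈ A, |z j| ^ p)) ^ (1 / p) * z i
    else x i

lemma lpKernel_eq (n : ℕ) (p c : ℝ) (A : Finset (Fin n)) (x : Fin n → ℝ) :
    lpKernel n p c A x = (coneMeasure n p c).map (kerMap n p A x) := rfl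

lemma meas_kerMap (n : ℕ) (p : ℝ) (A : Finset (Fin n)) (x : Fin n → ℝ) :
    Measurable (kerMap n p A x) := by
  apply measurable_pi_lambda
  intro i
  unfold kerMap
  by_cases hi : i ∈ A
  · simp only [hi, if_true]
    have hsum : Measurable (fun z : Fin n → ℝ => ∑ j ∈ A, |z j| ^ p) :=
      Finset.measurable_sum _ fun j _ =>
        (meas_rpow_const p).comp (measurable_pi_apply j).abs
    exact (((meas_rpow_const (1 / p)).comp (measurable_const.div hsum)).mul
      (measurable_pi_apply i))
  · simp only [hi, if_false]
    exact measurable_const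

lemma meas_distLp (n : ℕ) (p : ℝ) :
    Measurable (fun q : (Fin n → ℝ) × (Fin n → ℝ) => distLp n p q.1 q.2) := by
  unfold distLp
  apply Measurable.add
  · apply Finset.measurable_sum
    intro i _
    exact ((((meas_rpow_const p).comp
      ((measurable_pi_apply i).comp measurable_fst).abs)).sub
      ((meas_rpow_const p).comp ((measurable_pi_apply i).comp measurable_snd).abs)).abs
  · apply Finset.measurable_sum
    intro i _
    refine Measurable.ite ?_ measurable_const measurable_const
    exact measurableSet_lt (measurable_fst.eval.mul measurable_snd.eval) measurable_const

lemma distLp_nonneg (n : ℕ) (p : ℝ) (x y : Fin n → ℝ) : 0 ≤ distLp n p x y := by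
  unfold distLp
  refine add_nonneg (Finset.sum_nonneg fun i _ => abs_nonneg _)
    (Finset.sum_nonneg fun i _ => ?_)
  split <;> norm_num

lemma lpKernel_prob (n : ℕ) (p c : ℝ) [IsProbabilityMeasure (coneMeasure n p c)]
    (A : Finset (Fin n)) (x : Fin n → ℝ) :
    IsProbabilityMeasure (lpKernel n p c A x) := by
  rw [lpKernel_eq]
  exact Measure.isProbabilityMeasure_map (meas_kerMap n p A x).aemeasurable

lemma cone_ae (n : ℕ) (p c : ℝ) (hp : 0 < p) :
    ∀ᵐ z ∂(coneMeasure n p c), ∀ i, z i ≠ 0 := by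
  have hvol : ∀ᵐ g ∂(volume : Measure (Fin n → ℝ)), ∀ i, g i ≠ 0 := by
    rw [ae_all_iff]
    intro i
    rw [ae_iff]
    refine measure_mono_null (t := ↑(LinearMap.ker
      (LinearMap.proj i : (Fin n → ℝ) →ₗ[ℝ] ℝ))) ?_ ?_
    · intro g hg
      simp only [Set.mem_setOf_eq, not_not] at hg
      simpa [LinearMap.mem_ker] using hg
    · refine Measure.addHaar_submodule _ _ ?_
      intro h
      have h1 : (fun _ => (1:ℝ)) ∈ LinearMap.ker
          (LinearMap.proj i : (Fin n → ℝ) →ₗ[ℝ] ℝ) := h.symm ▸ Submodule.mem_top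
      simp [LinearMap.mem_ker] at h1
  have hg : ∀ᵐ g ∂(pGibbs n p c), ∀ i, g i ≠ 0 :=
    (withDensity_absolutelyContinuous _ _).ae_le hvol
  have hφ : Measurable (fun g : Fin n → ℝ => fun i => g i / (∑ j, |g j| ^ p) ^ (1 / p)) := by
    apply measurable_pi_lambda
    intro i
    exact (measurable_pi_apply i).div ((meas_rpow_const (1 / p)).comp
      (Finset.measurable_sum _ fun j _ => (meas_rpow_const p).comp (measurable_pi_apply j).abs))
  have hset : MeasurableSet {z : Fin n → ℝ | ∀ i, z i ≠ 0} := by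
    have : {z : Fin n → ℝ | ∀ i, z i ≠ 0} = ⋂ i, (fun z : Fin n → ℝ => z i) ⁻¹' ({0}ᶜ) := by
      ext z; simp
    rw [this]
    exact MeasurableSet.iInter fun i =>
      (measurable_pi_apply i) (measurableSet_singleton (0:ℝ)).compl
  unfold coneMeasure
  rw [ae_map_iff hφ.aemeasurable hset]
  filter_upwards [hg] with g hgne
  intro i
  have hpos : 0 < ∑ j, |g j| ^ p :=
    Finset.sum_pos' (fun j _ => Real.rpow_nonneg (abs_nonneg _) p)
      ⟨i, Finset.mem_univ i, Real.rpow_pos_of_pos (abs_pos.mpr (hgne i)) p⟩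
  exact div_ne_zero (hgne i) (ne_of_gt (Real.rpow_pos_of_pos hpos _))

lemma rpow_scale {p : ℝ} (hp : 0 < p) (d w : ℝ) (hd : 0 ≤ d) :
    |d ^ (1 / p) * w| ^ p = d * |w| ^ p := by
  rw [abs_mul, abs_of_nonneg (Real.rpow_nonneg hd _),
    Real.mul_rpow (Real.rpow_nonneg hd _) (abs_nonneg _)]
  congr 1
  rw [← Real.rpow_mul hd, one_div_mul_cancel (ne_of_gt hp), Real.rpow_one]

lemma dist_map_eq {n : ℕ} {p : ℝ} (hp : 0 < p) (A : Finset (Fin n))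
    (x y z : Fin n → ℝ) (hz : ∀ i, z i ≠ 0) :
    distLp n p (kerMap n p A x z) (kerMap n p A y z)
      = ∑ i ∈ Aᶜ, |(|x i| ^ p - |y i| ^ p)|
        + ∑ i ∈ Aᶜ, (if x i * y i < 0 then (1:ℝ) else 0)
        + |∑ i ∈ A, (|x i| ^ p - |y i| ^ p)| := by
  rcases Finset.eq_empty_or_nonempty A with rfl | ⟨i0, hi0⟩
  · have hx : kerMap n p ∅ x z = x := funext fun i => by simp [kerMap]
    have hy : kerMap n p ∅ y z = y := funext fun i => by simp [kerMap]
    rw [hx, hy, Finset.compl_empty, Finset.sum_empty, abs_zero, add_zero]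
    rfl
  · have hZ : 0 < ∑ j ∈ A, |z j| ^ p :=
      Finset.sum_pos' (fun j _ => Real.rpow_nonneg (abs_nonneg _) p)
        ⟨i0, hi0, Real.rpow_pos_of_pos (abs_pos.mpr (hz i0)) p⟩
    have hSx0 : 0 ≤ ∑ j ∈ A, |x j| ^ p :=
      Finset.sum_nonneg fun j _ => Real.rpow_nonneg (abs_nonneg _) p
    have hSy0 : 0 ≤ ∑ j ∈ A, |y j| ^ p :=
      Finset.sum_nonneg fun j _ => Real.rpow_nonneg (abs_nonneg _) p
    unfold distLp
    rw [← Finset.sum_add_sum_compl A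
        (fun i => |(|kerMap n p A x z i| ^ p - |kerMap n p A y z i| ^ p)|),
      ← Finset.sum_add_sum_compl A
        (fun i => if kerMap n p A x z i * kerMap n p A y z i < 0 then (1:ℝ) else 0)]
    have h1 : ∑ i ∈ A, |(|kerMap n p A x z i| ^ p - |kerMap n p A y z i| ^ p)|
        = |∑ j ∈ A, |x j| ^ p - ∑ j ∈ A, |y j| ^ p| := by
      have e : ∀ i ∈ A, |(|kerMap n p A x z i| ^ p - |kerMap n p A y z i| ^ p)|
          = |∑ j ∈ A, |x j| ^ p - ∑ j ∈ A, |y j| ^ p| / (∑ j ∈ A, |z j| ^ p) * |z i| ^ p := by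
        intro i hi
        simp only [kerMap, hi, if_true]
        rw [rpow_scale hp _ _ (div_nonneg hSx0 hZ.le),
          rpow_scale hp _ _ (div_nonneg hSy0 hZ.le)]
        rw [show (∑ j ∈ A, |x j| ^ p) / (∑ j ∈ A, |z j| ^ p) * |z i| ^ p
              - (∑ j ∈ A, |y j| ^ p) / (∑ j ∈ A, |z j| ^ p) * |z i| ^ p
            = ((∑ j ∈ A, |x j| ^ p - ∑ j ∈ A, |y j| ^ p) / (∑ j ∈ A, |z j| ^ p)) * |z i| ^ p
          from by ring]
        rw [abs_mul, abs_div, abs_of_pos hZ, abs_of_nonneg (Real.rpow_nonneg (abs_nonneg _) p)]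
      rw [Finset.sum_congr rfl e, ← Finset.mul_sum, div_mul_cancel₀ _ hZ.ne']
    have h2 : ∑ i ∈ A, (if kerMap n p A x z i * kerMap n p A y z i < 0 then (1:ℝ) else 0)
        = 0 := by
      refine Finset.sum_eq_zero fun i hi => ?_
      simp only [kerMap, hi, if_true]
      rw [if_neg]
      rw [not_lt]
      rw [show ((∑ j ∈ A, |x j| ^ p) / (∑ j ∈ A, |z j| ^ p)) ^ (1 / p) * z i
            * (((∑ j ∈ A, |y j| ^ p) / (∑ j ∈ A, |z j| ^ p)) ^ (1 / p) * z i)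
          = (((∑ j ∈ A, |x j| ^ p) / (∑ j ∈ A, |z j| ^ p)) ^ (1 / p)
            * ((∑ j ∈ A, |y j| ^ p) / (∑ j ∈ A, |z j| ^ p)) ^ (1 / p)) * (z i * z i)
        from by ring]
      exact mul_nonneg (mul_nonneg (Real.rpow_nonneg (div_nonneg hSx0 hZ.le) _)
        (Real.rpow_nonneg (div_nonneg hSy0 hZ.le) _)) (mul_self_nonneg _)
    have h3 : ∑ i ∈ Aᶜ, |(|kerMap n p A x z i| ^ p - |kerMap n p A y z i| ^ p)|
        = ∑ i ∈ Aᶜ, |(|x i| ^ p - |y i| ^ p)| := by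
      refine Finset.sum_congr rfl fun i hi => ?_
      have hi' : i ∉ A := Finset.mem_compl.mp hi
      simp only [kerMap, hi', if_false]
    have h4 : ∑ i ∈ Aᶜ, (if kerMap n p A x z i * kerMap n p A y z i < 0 then (1:ℝ) else 0)
        = ∑ i ∈ Aᶜ, (if x i * y i < 0 then (1:ℝ) else 0) := by
      refine Finset.sum_congr rfl fun i hi => ?_
      have hi' : i ∉ A := Finset.mem_compl.mp hi
      simp only [kerMap, hi', if_false]
    have h5 : |∑ i ∈ A, (|x i| ^ p - |y i| ^ p)|
        = |∑ j ∈ A, |x j| ^ p - ∑ j ∈ A, |y j| ^ p| := by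
      rw [Finset.sum_sub_distrib]
    rw [h1, h2, h3, h4, h5]
    ring

lemma W1lp_nonneg (n : ℕ) (p : ℝ) (μ ν : Measure (Fin n → ℝ)) : 0 ≤ W1lp n p μ ν := by
  refine Real.sInf_nonneg fun r hr => ?_
  obtain ⟨π, _, _, _, hr⟩ := hr
  rw [hr]
  exact integral_nonneg fun q => distLp_nonneg n p _ _

lemma W1lp_le_D (n : ℕ) (p c : ℝ) (hp : 0 < p)
    [IsProbabilityMeasure (coneMeasure n p c)] (A : Finset (Fin n)) (x y : Fin n → ℝ) :
    W1lp n p (lpKernel n p c A x) (lpKernel n p c A y)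
      ≤ ∑ i ∈ Aᶜ, |(|x i| ^ p - |y i| ^ p)|
        + ∑ i ∈ Aᶜ, (if x i * y i < 0 then (1:ℝ) else 0)
        + |∑ i ∈ A, (|x i| ^ p - |y i| ^ p)| := by
  have hF := meas_kerMap n p A x
  have hG := meas_kerMap n p A y
  have hH : Measurable (fun z => (kerMap n p A x z, kerMap n p A y z)) := hF.prodMk hG
  set π := (coneMeasure n p c).map (fun z => (kerMap n p A x z, kerMap n p A y z)) with hπdef
  have hπ : IsProbabilityMeasure π := Measure.isProbabilityMeasure_map hH.aemeasurable
  have h1 : π.map Prod.fst = lpKernel n p c A x := by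
    rw [hπdef, Measure.map_map measurable_fst hH]
    rfl
  have h2 : π.map Prod.snd = lpKernel n p c A y := by
    rw [hπdef, Measure.map_map measurable_snd hH]
    rfl
  have hint : ∫ q, distLp n p q.1 q.2 ∂π
      = ∑ i ∈ Aᶜ, |(|x i| ^ p - |y i| ^ p)|
        + ∑ i ∈ Aᶜ, (if x i * y i < 0 then (1:ℝ) else 0)
        + |∑ i ∈ A, (|x i| ^ p - |y i| ^ p)| := by
    rw [hπdef, integral_map hH.aemeasurable]
    swap
    · exact (meas_distLp n p).aestronglyMeasurable
    have heq : (fun z => distLp n p (kerMap n p A x z) (kerMap n p A y z))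
        =ᵐ[coneMeasure n p c] (fun _ =>
          ∑ i ∈ Aᶜ, |(|x i| ^ p - |y i| ^ p)|
          + ∑ i ∈ Aᶜ, (if x i * y i < 0 then (1:ℝ) else 0)
          + |∑ i ∈ A, (|x i| ^ p - |y i| ^ p)|) := by
      filter_upwards [cone_ae n p c hp] with z hz
      exact dist_map_eq hp A x y z hz
    rw [integral_congr_ae heq, integral_const]
    simp [measure_univ]
  apply csInf_le
  · refine ⟨0, fun r hr => ?_⟩
    obtain ⟨π', _, _, _, hr⟩ := hr
    rw [hr]
    exact integral_nonneg fun q => distLp_nonneg n p _ _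
  · exact ⟨π, hπ, h1, h2, hint.symm⟩

-- ### basis vectors and lower-bound machinery

noncomputable def eVec (n : ℕ) (m : Fin n) : Fin n → ℝ := fun k => if k = m then 1 else 0

lemma eVec_abs_pow {n : ℕ} {p : ℝ} (hp : 0 < p) (m k : Fin n) :
    |eVec n m k| ^ p = if k = m then 1 else 0 := by
  unfold eVec
  split
  · simp
  · simp [Real.zero_rpow (ne_of_gt hp)]

lemma eVec_sphere {n : ℕ} {p : ℝ} (hp : 0 < p) (m : Fin n) :
    ∑ k, |eVec n m k| ^ p = 1 := by
  simp_rw [eVec_abs_pow hp]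
  rw [Finset.sum_ite_eq' Finset.univ m fun _ => (1:ℝ)]
  simp

lemma lpKernel_eVec_dirac {n : ℕ} (p c : ℝ) (hp : 0 < p)
    [IsProbabilityMeasure (coneMeasure n p c)]
    {A : Finset (Fin n)} {m : Fin n} (hm : m ∉ A) :
    lpKernel n p c A (eVec n m) = Measure.dirac (eVec n m) := by
  rw [lpKernel_eq]
  have hconst : kerMap n p A (eVec n m) = fun _ => eVec n m := by
    funext z
    funext i
    unfold kerMap
    by_cases hi : i ∈ A
    · simp only [hi, if_true]
      have hS : ∑ j ∈ A, |eVec n m j| ^ p = 0 :=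
        Finset.sum_eq_zero fun j hj => by
          rw [eVec_abs_pow hp, if_neg (fun h : j = m => hm (h ▸ hj))]
      rw [hS, zero_div, Real.zero_rpow (one_div_ne_zero (ne_of_gt hp)), zero_mul]
      unfold eVec
      rw [if_neg (fun h : i = m => hm (h ▸ hi))]
    · simp only [hi, if_false]
  rw [hconst, Measure.map_const, measure_univ, one_smul]

lemma meas_sphere_zero_set {n : ℕ} (p : ℝ) (j : Fin n) (α : ℝ) :
    MeasurableSet {u : Fin n → ℝ | ∑ k, |u k| ^ p = 1 ∧ |u j| ^ p = α} := by
  have h1 : MeasurableSet {u : Fin n → ℝ | ∑ k, |u k| ^ p = 1} :=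
    measurableSet_eq_fun
      (Finset.measurable_sum _ fun k _ =>
        (meas_rpow_const p).comp (measurable_pi_apply k).abs) measurable_const
  have h2 : MeasurableSet {u : Fin n → ℝ | |u j| ^ p = α} :=
    measurableSet_eq_fun
      ((meas_rpow_const p).comp (measurable_pi_apply j).abs) measurable_const
  exact h1.inter h2

lemma ae_kernel_eVec {n : ℕ} (p c : ℝ) (hp : 0 < p)
    [IsProbabilityMeasure (coneMeasure n p c)]
    {A : Finset (Fin n)} {j m : Fin n} (hjA : j ∉ A) (hmj : m ≠ j) :
    ∀ᵐ u ∂(lpKernel n p c A (eVec n m)),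
      ∑ k, |u k| ^ p = 1 ∧ |u j| ^ p = 0 := by
  by_cases hm : m ∈ A
  · rw [lpKernel_eq, ae_map_iff (meas_kerMap n p A (eVec n m)).aemeasurable
      (meas_sphere_zero_set p j 0)]
    filter_upwards [cone_ae n p c hp] with z hz
    have hZ : 0 < ∑ j' ∈ A, |z j'| ^ p :=
      Finset.sum_pos' (fun j' _ => Real.rpow_nonneg (abs_nonneg _) p)
        ⟨m, hm, Real.rpow_pos_of_pos (abs_pos.mpr (hz m)) p⟩
    have hS : ∑ j' ∈ A, |eVec n m j'| ^ p = 1 := by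
      simp_rw [eVec_abs_pow hp]
      rw [Finset.sum_ite_eq' A m fun _ => (1:ℝ), if_pos hm]
    constructor
    · rw [← Finset.sum_add_sum_compl A (fun k => |kerMap n p A (eVec n m) z k| ^ p)]
      have e1 : ∑ k ∈ A, |kerMap n p A (eVec n m) z k| ^ p = 1 := by
        have e : ∀ k ∈ A, |kerMap n p A (eVec n m) z k| ^ p
            = (1 / ∑ j' ∈ A, |z j'| ^ p) * |z k| ^ p := by
          intro k hk
          simp only [kerMap, hk, if_true]
          rw [hS, rpow_scale hp _ _ (div_nonneg zero_le_one hZ.le)]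
        rw [Finset.sum_congr rfl e, ← Finset.mul_sum, one_div_mul_cancel hZ.ne']
      have e2 : ∑ k ∈ Aᶜ, |kerMap n p A (eVec n m) z k| ^ p = 0 := by
        refine Finset.sum_eq_zero fun k hk => ?_
        have hk' : k ∉ A := Finset.mem_compl.mp hk
        simp only [kerMap, hk', if_false]
        rw [eVec_abs_pow hp, if_neg (fun h : k = m => hk' (h ▸ hm))]
      rw [e1, e2]
      norm_num
    · have : kerMap n p A (eVec n m) z j = eVec n m j := by
        simp only [kerMap, hjA, if_false]
      rw [this, eVec_abs_pow hp, if_neg (fun h : j = m => hmj h.symm)]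
  · rw [lpKernel_eVec_dirac p c hp hm, ae_dirac_iff (meas_sphere_zero_set p j 0)]
    refine ⟨eVec_sphere hp m, ?_⟩
    rw [eVec_abs_pow hp, if_neg (fun h : j = m => hmj h.symm)]

lemma ae_dirac_eVec {n : ℕ} (p c : ℝ) (hp : 0 < p)
    [IsProbabilityMeasure (coneMeasure n p c)]
    {A : Finset (Fin n)} {m : Fin n} (hm : m ∉ A) :
    ∀ᵐ u ∂(lpKernel n p c A (eVec n m)),
      ∑ k, |u k| ^ p = 1 ∧ |u m| ^ p = 1 := by
  rw [lpKernel_eVec_dirac p c hp hm, ae_dirac_iff (meas_sphere_zero_set p m 1)]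
  refine ⟨eVec_sphere hp m, ?_⟩
  rw [eVec_abs_pow hp, if_pos rfl]

lemma distLp_eVec {n : ℕ} {p : ℝ} (hp : 0 < p) {i j : Fin n} (hij : i ≠ j) :
    distLp n p (eVec n i) (eVec n j) = 2 := by
  unfold distLp
  have h2 : ∑ k, (if eVec n i k * eVec n j k < 0 then (1:ℝ) else 0) = 0 := by
    refine Finset.sum_eq_zero fun k _ => ?_
    rw [if_neg (not_lt.mpr (mul_nonneg (by unfold eVec; split <;> norm_num)
      (by unfold eVec; split <;> norm_num)))]
  have h1 : ∀ k, |(|eVec n i k| ^ p - |eVec n j k| ^ p)|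
      = (if k = i then (1:ℝ) else 0) + (if k = j then (1:ℝ) else 0) := by
    intro k
    rw [eVec_abs_pow hp, eVec_abs_pow hp]
    by_cases hki : k = i
    · subst hki
      simp [hij]
    · by_cases hkj : k = j
      · subst hkj
        simp [hki]
      · simp [hki, hkj]
  rw [h2, add_zero, Finset.sum_congr rfl (fun k _ => h1 k), Finset.sum_add_distrib,
    Finset.sum_ite_eq' Finset.univ i fun _ => (1:ℝ),
    Finset.sum_ite_eq' Finset.univ j fun _ => (1:ℝ)]
  norm_num

lemma W1_ge {n : ℕ} (p : ℝ) (μ ν : Measure (Fin n → ℝ))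
    [IsProbabilityMeasure μ] [IsProbabilityMeasure ν]
    (j : Fin n) (α β : ℝ)
    (hμ : ∀ᵐ u ∂μ, ∑ k, |u k| ^ p = 1 ∧ |u j| ^ p = α)
    (hν : ∀ᵐ v ∂ν, ∑ k, |v k| ^ p = 1 ∧ |v j| ^ p = β) :
    2 * |α - β| ≤ W1lp n p μ ν := by
  apply le_csInf
  · refine ⟨∫ q, distLp n p q.1 q.2 ∂(μ.prod ν), μ.prod ν, inferInstance, ?_, ?_, rfl⟩
    · rw [Measure.map_fst_prod, measure_univ, one_smul]
    · rw [Measure.map_snd_prod, measure_univ, one_smul]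
  · rintro r ⟨π, hπ, h1, h2, rfl⟩
    have hq1 : ∀ᵐ q ∂π, ∑ k, |q.1 k| ^ p = 1 ∧ |q.1 j| ^ p = α :=
      (ae_map_iff measurable_fst.aemeasurable (meas_sphere_zero_set p j α)).mp
        (h1.symm ▸ hμ)
    have hq2 : ∀ᵐ q ∂π, ∑ k, |q.2 k| ^ p = 1 ∧ |q.2 j| ^ p = β :=
      (ae_map_iff measurable_snd.aemeasurable (meas_sphere_zero_set p j β)).mp
        (h2.symm ▸ hν)
    have hb : ∀ᵐ q ∂π, 2 * |α - β| ≤ distLp n p q.1 q.2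
        ∧ distLp n p q.1 q.2 ≤ 2 + n := by
      filter_upwards [hq1, hq2] with q hq1 hq2
      obtain ⟨hs1, hj1⟩ := hq1
      obtain ⟨hs2, hj2⟩ := hq2
      have habs_le : ∑ k, |(|q.1 k| ^ p - |q.2 k| ^ p)| ≤ distLp n p q.1 q.2 := by
        unfold distLp
        have : 0 ≤ ∑ k, (if q.1 k * q.2 k < 0 then (1:ℝ) else 0) :=
          Finset.sum_nonneg fun k _ => by split <;> norm_num
        linarith
      constructor
      · have e1 : ∑ k ∈ ({j} : Finset (Fin n))ᶜ, |q.1 k| ^ p = 1 - α := by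
          have := Finset.sum_add_sum_compl ({j} : Finset (Fin n)) (fun k => |q.1 k| ^ p)
          rw [Finset.sum_singleton, hj1, hs1] at this
          linarith
        have e2 : ∑ k ∈ ({j} : Finset (Fin n))ᶜ, |q.2 k| ^ p = 1 - β := by
          have := Finset.sum_add_sum_compl ({j} : Finset (Fin n)) (fun k => |q.2 k| ^ p)
          rw [Finset.sum_singleton, hj2, hs2] at this
          linarith
        have key : |(|q.1 j| ^ p - |q.2 j| ^ p)
              - ∑ k ∈ ({j} : Finset (Fin n))ᶜ, (|q.1 k| ^ p - |q.2 k| ^ p)|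
            ≤ ∑ k, |(|q.1 k| ^ p - |q.2 k| ^ p)| :=
          calc |(|q.1 j| ^ p - |q.2 j| ^ p)
              - ∑ k ∈ ({j} : Finset (Fin n))ᶜ, (|q.1 k| ^ p - |q.2 k| ^ p)|
              ≤ |(|q.1 j| ^ p - |q.2 j| ^ p)|
                + |∑ k ∈ ({j} : Finset (Fin n))ᶜ, (|q.1 k| ^ p - |q.2 k| ^ p)| :=
                abs_sub _ _
            _ ≤ |(|q.1 j| ^ p - |q.2 j| ^ p)|
                + ∑ k ∈ ({j} : Finset (Fin n))ᶜ, |(|q.1 k| ^ p - |q.2 k| ^ p)| := by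
                have := Finset.abs_sum_le_sum_abs
                  (fun k => |q.1 k| ^ p - |q.2 k| ^ p) (({j} : Finset (Fin n))ᶜ)
                linarith
            _ = ∑ k ∈ ({j} : Finset (Fin n)), |(|q.1 k| ^ p - |q.2 k| ^ p)|
                + ∑ k ∈ ({j} : Finset (Fin n))ᶜ, |(|q.1 k| ^ p - |q.2 k| ^ p)| := by
                rw [Finset.sum_singleton]
            _ = ∑ k, |(|q.1 k| ^ p - |q.2 k| ^ p)| :=
                Finset.sum_add_sum_compl _ _
        have eval : (|q.1 j| ^ p - |q.2 j| ^ p)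
            - ∑ k ∈ ({j} : Finset (Fin n))ᶜ, (|q.1 k| ^ p - |q.2 k| ^ p)
            = 2 * (α - β) := by
          rw [Finset.sum_sub_distrib, e1, e2, hj1, hj2]
          ring
        rw [eval] at key
        rw [show |2 * (α - β)| = 2 * |α - β| from by rw [abs_mul]; norm_num] at key
        linarith
      · unfold distLp
        have b1 : ∑ k, |(|q.1 k| ^ p - |q.2 k| ^ p)| ≤ 2 := by
          have : ∀ k, |(|q.1 k| ^ p - |q.2 k| ^ p)| ≤ |q.1 k| ^ p + |q.2 k| ^ p := by
            intro k
            have h1' : 0 ≤ |q.1 k| ^ p := Real.rpow_nonneg (abs_nonneg _) p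
            have h2' : 0 ≤ |q.2 k| ^ p := Real.rpow_nonneg (abs_nonneg _) p
            rw [abs_sub_comm]
            rcases le_total (|q.1 k| ^ p) (|q.2 k| ^ p) with h | h
            · rw [abs_of_nonneg (by linarith)]; linarith
            · rw [abs_of_nonpos (by linarith)]; linarith
          calc ∑ k, |(|q.1 k| ^ p - |q.2 k| ^ p)|
              ≤ ∑ k, (|q.1 k| ^ p + |q.2 k| ^ p) := Finset.sum_le_sum fun k _ => this k
            _ = 2 := by rw [Finset.sum_add_distrib, hs1, hs2]; norm_num
        have b2 : ∑ k, (if q.1 k * q.2 k < 0 then (1:ℝ) else 0) ≤ n := by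
          calc ∑ k, (if q.1 k * q.2 k < 0 then (1:ℝ) else 0)
              ≤ ∑ k : Fin n, (1:ℝ) := Finset.sum_le_sum fun k _ => by split <;> norm_num
            _ = n := by simp
        linarith
    have hint : Integrable (fun q => distLp n p q.1 q.2) π := by
      refine Integrable.mono' (integrable_const (2 + (n:ℝ)))
        (meas_distLp n p).aestronglyMeasurable ?_
      filter_upwards [hb] with q hq
      rw [Real.norm_eq_abs, abs_of_nonneg (distLp_nonneg n p _ _)]
      exact hq.2
    calc 2 * |α - β| = ∫ _, 2 * |α - β| ∂π := by
          rw [integral_const]; simp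
      _ ≤ ∫ q, distLp n p q.1 q.2 ∂π :=
          integral_mono_ae (integrable_const _) hint (hb.mono fun q hq => hq.1)

-- ### combinatorial core
section Comb
variable {n : ℕ}


lemma sum_mem_ite (A : Finset (Fin n)) (f : Fin n → ℝ) :
    ∑ i ∈ A, f i = ∑ i, if i ∈ A then f i else 0 := by
  rw [← Finset.sum_filter]; congr 1; ext i; simp

lemma sum_compl_ite (A : Finset (Fin n)) (f : Fin n → ℝ) :
    ∑ i ∈ Aᶜ, f i = ∑ i, if i ∉ A then f i else 0 := by
  rw [← Finset.sum_filter]; congr 1; ext i; simp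

lemma swap1 (θ : Finset (Fin n) → ℝ) (cv : Fin n → ℝ) :
    ∑ A, θ A * ∑ i ∈ Aᶜ, cv i
      = ∑ i, cv i * ∑ A ∈ Finset.univ.filter (fun A => i ∉ A), θ A := by
  have h : ∀ A : Finset (Fin n), θ A * ∑ i ∈ Aᶜ, cv i
      = ∑ i, if i ∉ A then θ A * cv i else 0 := by
    intro A
    rw [sum_compl_ite, Finset.mul_sum]
    exact Finset.sum_congr rfl fun i _ => by split <;> simp
  simp_rw [h]
  rw [Finset.sum_comm]
  refine Finset.sum_congr rfl fun i _ => ?_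
  rw [← Finset.sum_filter, ← Finset.sum_mul, mul_comm]

lemma swap2 (θ : Finset (Fin n) → ℝ) (a b : Fin n → ℝ) :
    ∑ A, θ A * ((∑ i ∈ A, a i) * (∑ j ∈ A, b j))
      = ∑ i, ∑ j, (a i * b j) *
          (∑ A ∈ Finset.univ.filter (fun A => i ∈ A ∧ j ∈ A), θ A) := by
  have key : ∀ A : Finset (Fin n), θ A * ((∑ i ∈ A, a i) * (∑ j ∈ A, b j))
      = ∑ i, ∑ j, if i ∈ A ∧ j ∈ A then θ A * (a i * b j) else 0 := by
    intro A
    rw [Finset.sum_mul_sum]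
    simp_rw [Finset.mul_sum]
    rw [sum_mem_ite A (fun i => ∑ j ∈ A, θ A * (a i * b j))]
    refine Finset.sum_congr rfl fun i _ => ?_
    by_cases hi : i ∈ A
    · simp only [hi, if_true, true_and]
      rw [sum_mem_ite A (fun j => θ A * (a i * b j))]
    · simp [hi]
  simp_rw [key]
  rw [Finset.sum_comm]
  refine Finset.sum_congr rfl fun i _ => ?_
  rw [Finset.sum_comm]
  refine Finset.sum_congr rfl fun j _ => ?_
  rw [← Finset.sum_filter, ← Finset.sum_mul, mul_comm]

lemma comb (θ : Finset (Fin n) → ℝ) (hθ0 : ∀ A, 0 ≤ θ A)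
    (hθ1 : ∑ A, θ A = 1) (δ s : Fin n → ℝ) (hδ : ∑ i, δ i = 0) (hs : ∀ i, 0 ≤ s i)
    (t : ℝ)
    (ht : ∀ i j : Fin n, t ≤ ∑ A ∈ Finset.univ.filter (fun A => i ∈ A ∧ j ∈ A), θ A) :
    ∑ A, θ A * (∑ i ∈ Aᶜ, |δ i| + ∑ i ∈ Aᶜ, s i + |∑ i ∈ A, δ i|)
      ≤ (1 - t) * (∑ i, |δ i| + ∑ i, s i) := by
  classical
  set a : Fin n → ℝ := fun i => max (δ i) 0 with ha
  set b : Fin n → ℝ := fun i => max (-(δ i)) 0 with hb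
  have ha0 : ∀ i, 0 ≤ a i := fun i => le_max_right _ _
  have hb0 : ∀ i, 0 ≤ b i := fun i => le_max_right _ _
  have habs : ∀ i, |δ i| = a i + b i := by
    intro i
    rcases le_total (δ i) 0 with h | h
    · simp [ha, hb, abs_of_nonpos h, max_eq_right h, max_eq_left (neg_nonneg.2 h)]
    · simp [ha, hb, abs_of_nonneg h, max_eq_left h, max_eq_right (neg_nonpos.2 h)]
  have hsub : ∀ i, δ i = a i - b i := by
    intro i
    rcases le_total (δ i) 0 with h | h
    · simp [ha, hb, max_eq_right h, max_eq_left (neg_nonneg.2 h)]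
    · simp [ha, hb, max_eq_left h, max_eq_right (neg_nonpos.2 h)]
  set P : ℝ := ∑ i, a i with hPdef
  have hQ : ∑ i, b i = P := by
    have : ∑ i, (a i - b i) = 0 := by
      rw [← hδ]; exact Finset.sum_congr rfl fun i _ => (hsub i).symm
    rw [Finset.sum_sub_distrib] at this
    linarith
  have hP0 : 0 ≤ P := Finset.sum_nonneg fun i _ => ha0 i
  have haA : ∀ A : Finset (Fin n), ∑ i ∈ A, a i ≤ P :=
    fun A => Finset.sum_le_sum_of_subset_of_nonneg (Finset.subset_univ A)
      (fun i _ _ => ha0 i)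
  have hbA : ∀ A : Finset (Fin n), ∑ i ∈ A, b i ≤ P := by
    intro A
    rw [← hQ]
    exact Finset.sum_le_sum_of_subset_of_nonneg (Finset.subset_univ A)
      (fun i _ _ => hb0 i)
  have haA0 : ∀ A : Finset (Fin n), 0 ≤ ∑ i ∈ A, a i :=
    fun A => Finset.sum_nonneg fun i _ => ha0 i
  have hbA0 : ∀ A : Finset (Fin n), 0 ≤ ∑ i ∈ A, b i :=
    fun A => Finset.sum_nonneg fun i _ => hb0 i
  have hident : ∀ A : Finset (Fin n),
      ∑ i ∈ Aᶜ, |δ i| + |∑ i ∈ A, δ i|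
        = 2 * P - 2 * min (∑ i ∈ A, a i) (∑ i ∈ A, b i) := by
    intro A
    have h1 : ∑ i ∈ Aᶜ, |δ i| = (P - ∑ i ∈ A, a i) + (P - ∑ i ∈ A, b i) := by
      have e1 : ∑ i ∈ Aᶜ, |δ i| = ∑ i ∈ Aᶜ, a i + ∑ i ∈ Aᶜ, b i := by
        rw [← Finset.sum_add_distrib]
        exact Finset.sum_congr rfl fun i _ => habs i
      have e2 : ∑ i ∈ A, a i + ∑ i ∈ Aᶜ, a i = P := Finset.sum_add_sum_compl A a
      have e3 : ∑ i ∈ A, b i + ∑ i ∈ Aᶜ, b i = P := by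
        rw [Finset.sum_add_sum_compl A b]; exact hQ
      linarith
    have h2 : ∑ i ∈ A, δ i = ∑ i ∈ A, a i - ∑ i ∈ A, b i := by
      rw [← Finset.sum_sub_distrib]
      exact Finset.sum_congr rfl fun i _ => hsub i
    have h3 : |∑ i ∈ A, a i - ∑ i ∈ A, b i|
        = ∑ i ∈ A, a i + ∑ i ∈ A, b i
          - 2 * min (∑ i ∈ A, a i) (∑ i ∈ A, b i) := by
      rcases le_total (∑ i ∈ A, a i) (∑ i ∈ A, b i) with h | h
      · rw [abs_of_nonpos (by linarith), min_eq_left h]; ring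
      · rw [abs_of_nonneg (by linarith), min_eq_right h]; ring
    rw [h1, h2, h3]; ring
  -- split the main sum
  have hsplit : ∑ A, θ A * (∑ i ∈ Aᶜ, |δ i| + ∑ i ∈ Aᶜ, s i + |∑ i ∈ A, δ i|)
      = ∑ A, θ A * (2 * P - 2 * min (∑ i ∈ A, a i) (∑ i ∈ A, b i))
        + ∑ A, θ A * ∑ i ∈ Aᶜ, s i := by
    rw [← Finset.sum_add_distrib]
    refine Finset.sum_congr rfl fun A _ => ?_
    rw [← hident A]; ring
  rw [hsplit]
  -- bound the s-part
  have hw : ∀ i : Fin n,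
      ∑ A ∈ Finset.univ.filter (fun A => i ∉ A), θ A ≤ 1 - t := by
    intro i
    have hsum : ∑ A ∈ Finset.univ.filter (fun A : Finset (Fin n) => i ∈ A), θ A
        + ∑ A ∈ Finset.univ.filter (fun A => ¬ i ∈ A), θ A = 1 := by
      rw [Finset.sum_filter_add_sum_filter_not]; exact hθ1
    have hfe : Finset.univ.filter (fun A : Finset (Fin n) => i ∈ A ∧ i ∈ A)
        = Finset.univ.filter (fun A => i ∈ A) := by
      congr 1; ext A; simp
    have := ht i i
    rw [hfe] at this
    linarith
  have hS : ∑ A, θ A * ∑ i ∈ Aᶜ, s i ≤ (1 - t) * ∑ i, s i := by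
    rw [swap1, Finset.mul_sum]
    refine Finset.sum_le_sum fun i _ => ?_
    rw [mul_comm (1 - t)]
    exact mul_le_mul_of_nonneg_left (hw i) (hs i)
  -- bound the min-part
  have hM : t * P ≤ ∑ A, θ A * min (∑ i ∈ A, a i) (∑ i ∈ A, b i) := by
    set M := ∑ A, θ A * min (∑ i ∈ A, a i) (∑ i ∈ A, b i) with hMdef
    have hM0 : 0 ≤ M :=
      Finset.sum_nonneg fun A _ =>
        mul_nonneg (hθ0 A) (le_min (haA0 A) (hbA0 A))
    rcases eq_or_lt_of_le hP0 with hP | hP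
    · rw [← hP]; simpa using hM0
    · have step1 : ∑ A, θ A * ((∑ i ∈ A, a i) * (∑ j ∈ A, b j)) ≤ P * M := by
        rw [hMdef, Finset.mul_sum]
        refine Finset.sum_le_sum fun A _ => ?_
        have : (∑ i ∈ A, a i) * (∑ j ∈ A, b j)
            ≤ P * min (∑ i ∈ A, a i) (∑ i ∈ A, b i) := by
          rcases le_total (∑ i ∈ A, a i) (∑ i ∈ A, b i) with h | h
          · rw [min_eq_left h, mul_comm]
            exact mul_le_mul (hbA A) le_rfl (haA0 A) hP0
          · rw [min_eq_right h]
            exact mul_le_mul (haA A) le_rfl (hbA0 A) hP0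
        calc θ A * ((∑ i ∈ A, a i) * (∑ j ∈ A, b j))
            ≤ θ A * (P * min (∑ i ∈ A, a i) (∑ i ∈ A, b i)) :=
              mul_le_mul_of_nonneg_left this (hθ0 A)
          _ = P * (θ A * min (∑ i ∈ A, a i) (∑ i ∈ A, b i)) := by ring
      have e : ((∑ i, a i) * (∑ j, b j)) * t = ∑ i, ∑ j, (a i * b j) * t := by
        rw [Finset.sum_mul_sum, Finset.sum_mul]
        exact Finset.sum_congr rfl fun i _ => Finset.sum_mul _ _ _
      have step2 : t * (P * P) ≤ ∑ A, θ A * ((∑ i ∈ A, a i) * (∑ j ∈ A, b j)) := by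
        have e2 : t * (P * P) = ∑ i, ∑ j, (a i * b j) * t := by
          rw [← e, hQ, hPdef]; ring
        rw [swap2, e2]
        exact Finset.sum_le_sum fun i _ => Finset.sum_le_sum fun j _ =>
          mul_le_mul_of_nonneg_left (ht i j) (mul_nonneg (ha0 i) (hb0 j))
      have hmul : P * (t * P) ≤ P * M := by
        have e3 : P * (t * P) = t * (P * P) := by ring
        rw [e3]; exact le_trans step2 step1
      exact le_of_mul_le_mul_left hmul hP
  -- combine
  have habs_tot : ∑ i, |δ i| = 2 * P := by
    have : ∑ i, |δ i| = ∑ i, a i + ∑ i, b i := by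
      rw [← Finset.sum_add_distrib]
      exact Finset.sum_congr rfl fun i _ => habs i
    rw [this, hQ]; ring
  have hfirst : ∑ A, θ A * (2 * P - 2 * min (∑ i ∈ A, a i) (∑ i ∈ A, b i))
      = 2 * P - 2 * ∑ A, θ A * min (∑ i ∈ A, a i) (∑ i ∈ A, b i) := by
    have hexp : ∀ A : Finset (Fin n),
        θ A * (2 * P - 2 * min (∑ i ∈ A, a i) (∑ i ∈ A, b i))
          = (2 * P) * θ A - 2 * (θ A * min (∑ i ∈ A, a i) (∑ i ∈ A, b i)) :=
      fun A => by ring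
    simp_rw [hexp]
    rw [Finset.sum_sub_distrib, ← Finset.mul_sum, ← Finset.mul_sum, hθ1, mul_one]
  rw [habs_tot, hfirst, mul_add]
  have hexp2 : (1 - t) * (2 * P) = 2 * P - 2 * (t * P) := by ring
  linarith [hS, hM, hexp2]

end Comb


/-- Optimal contraction constant on `ℓ_p` spheres: for any probability vector `(θ_A)`,
the optimal constant `κ` in `∑_A θ_A W₁(T_A(x,·),T_A(y,·)) ≤ (1-κ) dist(x,y)`
(over all `x,y` on the `ℓ_p` sphere) equals `θ⋆⋆ = min_{i≠j} ∑_{A ⊇ {i,j}} θ_A`. -/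
theorem stmt_17 {n : ℕ} (hn : 2 ≤ n) (p c : ℝ) (hp : 0 < p) (hc : 0 < c)
    [IsProbabilityMeasure (coneMeasure n p c)]
    (θ : Finset (Fin n) → ℝ) (hθ0 : ∀ A, 0 ≤ θ A) (hθ1 : ∑ A, θ A = 1) :
    IsGreatest {κ : ℝ |
        ∀ x y : Fin n → ℝ, (∑ i, |x i| ^ p = 1) → (∑ i, |y i| ^ p = 1) →
          ∑ A : Finset (Fin n), θ A * W1lp n p (lpKernel n p c A x) (lpKernel n p c A y)
            ≤ (1 - κ) * distLp n p x y}
      (⨅ q : {q : Fin n × Fin n // q.1 ≠ q.2},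
        ∑ A ∈ Finset.univ.filter (fun A => q.1.1 ∈ A ∧ q.1.2 ∈ A), θ A) := by
  haveI : Nontrivial (Fin n) := Fin.nontrivial_iff_two_le.mpr hn
  haveI hne : Nonempty {q : Fin n × Fin n // q.1 ≠ q.2} := by
    obtain ⟨a, b, hab⟩ := exists_pair_ne (Fin n)
    exact ⟨⟨(a, b), hab⟩⟩
  set t := ⨅ q : {q : Fin n × Fin n // q.1 ≠ q.2},
      ∑ A ∈ Finset.univ.filter (fun A => q.1.1 ∈ A ∧ q.1.2 ∈ A), θ A with htdef
  have hts : ∀ i j : Fin n,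
      t ≤ ∑ A ∈ Finset.univ.filter (fun A => i ∈ A ∧ j ∈ A), θ A := by
    intro i j
    by_cases hij : i = j
    · subst hij
      obtain ⟨j', hj'⟩ := exists_ne i
      have h1 : t ≤ ∑ A ∈ Finset.univ.filter (fun A => i ∈ A ∧ j' ∈ A), θ A :=
        ciInf_le (Finite.bddBelow_range _)
          (⟨(i, j'), Ne.symm hj'⟩ : {q : Fin n × Fin n // q.1 ≠ q.2})
      refine le_trans h1 (Finset.sum_le_sum_of_subset_of_nonneg ?_ fun A _ _ => hθ0 A)
      intro A hA
      simp only [Finset.mem_filter] at hA ⊢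
      exact ⟨hA.1, hA.2.1, hA.2.1⟩
    · exact ciInf_le (Finite.bddBelow_range _)
        (⟨(i, j), hij⟩ : {q : Fin n × Fin n // q.1 ≠ q.2})
  constructor
  · -- membership: the contraction inequality holds with κ = θ⋆⋆
    intro x y hx hy
    have hδ : ∑ i, (|x i| ^ p - |y i| ^ p) = 0 := by
      rw [Finset.sum_sub_distrib, hx, hy]; ring
    calc ∑ A : Finset (Fin n), θ A * W1lp n p (lpKernel n p c A x) (lpKernel n p c A y)
        ≤ ∑ A : Finset (Fin n), θ A *
            (∑ i ∈ Aᶜ, |(|x i| ^ p - |y i| ^ p)|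
             + ∑ i ∈ Aᶜ, (if x i * y i < 0 then (1:ℝ) else 0)
             + |∑ i ∈ A, (|x i| ^ p - |y i| ^ p)|) :=
          Finset.sum_le_sum fun A _ =>
            mul_le_mul_of_nonneg_left (W1lp_le_D n p c hp A x y) (hθ0 A)
      _ ≤ (1 - t) * (∑ i, |(|x i| ^ p - |y i| ^ p)|
             + ∑ i, (if x i * y i < 0 then (1:ℝ) else 0)) :=
          comb θ hθ0 hθ1 (fun i => |x i| ^ p - |y i| ^ p)
            (fun i => if x i * y i < 0 then (1:ℝ) else 0) hδ
            (fun i => by by_cases h : x i * y i < 0 <;> simp [h]) t hts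
      _ = (1 - t) * distLp n p x y := rfl
  · -- upper bound: any admissible κ is at most θ⋆⋆
    intro κ hκ
    rw [htdef]
    refine le_ciInf fun q => ?_
    obtain ⟨⟨i, j⟩, hij⟩ := q
    replace hij : i ≠ j := hij
    dsimp only
    have hyp := hκ (eVec n i) (eVec n j) (eVec_sphere hp i) (eVec_sphere hp j)
    rw [distLp_eVec hp hij] at hyp
    have hlow : ∑ A : Finset (Fin n), θ A * (if i ∈ A ∧ j ∈ A then (0:ℝ) else 2)
        ≤ ∑ A : Finset (Fin n), θ A *
            W1lp n p (lpKernel n p c A (eVec n i)) (lpKernel n p c A (eVec n j)) := by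
      refine Finset.sum_le_sum fun A _ => ?_
      haveI := lpKernel_prob n p c A (eVec n i)
      haveI := lpKernel_prob n p c A (eVec n j)
      by_cases hA : i ∈ A ∧ j ∈ A
      · rw [if_pos hA, mul_zero]
        exact mul_nonneg (hθ0 A) (W1lp_nonneg n p _ _)
      · rw [if_neg hA]
        refine mul_le_mul_of_nonneg_left ?_ (hθ0 A)
        by_cases hj : j ∈ A
        · have hi : i ∉ A := fun hi => hA ⟨hi, hj⟩
          have := W1_ge p _ _ i 1 0
            (ae_dirac_eVec p c hp hi)
            (ae_kernel_eVec p c hp hi (Ne.symm hij))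
          simpa using this
        · have := W1_ge p _ _ j 0 1
            (ae_kernel_eVec p c hp hj hij)
            (ae_dirac_eVec p c hp hj)
          simpa using this
    have hsum : ∑ A : Finset (Fin n), θ A * (if i ∈ A ∧ j ∈ A then (0:ℝ) else 2)
        = 2 * (1 - ∑ A ∈ Finset.univ.filter (fun A => i ∈ A ∧ j ∈ A), θ A) := by
      rw [← Finset.sum_filter_add_sum_filter_not Finset.univ (fun A => i ∈ A ∧ j ∈ A)
        (fun A => θ A * (if i ∈ A ∧ j ∈ A then (0:ℝ) else 2))]
      have e1 : ∑ A ∈ Finset.univ.filter (fun A => i ∈ A ∧ j ∈ A),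
          θ A * (if i ∈ A ∧ j ∈ A then (0:ℝ) else 2) = 0 :=
        Finset.sum_eq_zero fun A hA => by
          rw [if_pos (Finset.mem_filter.mp hA).2, mul_zero]
      have e2 : ∑ A ∈ Finset.univ.filter (fun A => ¬(i ∈ A ∧ j ∈ A)),
          θ A * (if i ∈ A ∧ j ∈ A then (0:ℝ) else 2)
          = 2 * ∑ A ∈ Finset.univ.filter (fun A => ¬(i ∈ A ∧ j ∈ A)), θ A := by
        rw [Finset.mul_sum]
        refine Finset.sum_congr rfl fun A hA => ?_
        rw [if_neg (Finset.mem_filter.mp hA).2]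
        ring
      have e3 : ∑ A ∈ Finset.univ.filter (fun A => i ∈ A ∧ j ∈ A), θ A
          + ∑ A ∈ Finset.univ.filter (fun A => ¬(i ∈ A ∧ j ∈ A)), θ A = 1 := by
        rw [Finset.sum_filter_add_sum_filter_not]; exact hθ1
      rw [e1, e2, zero_add]
      linarith
    rw [hsum] at hlow
    linarith
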